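/- Let N be a reticulation-visible network and let C be a lowest big tree node component of N. Then the root ρ(C) of C is visible on every leaf in L_C. -/

import Mathlib

/-!
Framework for rooted phylogenetic networks, formalized as directed graphs
given by an adjacency relation `A : V → V → Prop` on a vertex type `V`,
with a distinguished root `ρ`.  Leaves are identified with their (unique)
labels, i.e. the labelling is the identity on leaf vertices.
-/

namespace PhyloNet

variable {V : Type} {W : Type}

/-- Indegree of a vertex. -/
noncomputable def inDeg (A : V → V → Prop) (v : V) : ℕ := {u | A u v}.ncard

/-- Outdegree of a vertex. -/
noncomputable def outDeg (A : V → V → Prop) (v : V) : ℕ := {w | A v w}.ncard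

/-- `p` is a directed path (walk) from `u` to `v`, given as the list of its vertices. -/
def IsPath (A : V → V → Prop) (u v : V) (p : List V) : Prop :=
  p.Chain' A ∧ p.head? = some u ∧ p.getLast? = some v

/-- `A` with root `ρ` is a phylogenetic network: a finite rooted acyclic digraph whose
root has indegree 0 and outdegree ≥ 2, from which every node is reachable, and in which
every non-root node is either a leaf (indegree 1, outdegree 0), an internal tree node
(indegree 1, outdegree ≥ 2) or a reticulation (indegree ≥ 2, outdegree 1). -/
structure IsNetwork (A : V → V → Prop) (ρ : V) : Prop where
  finite : Finite V
  acyclic : ∀ v, ¬ Relation.TransGen A v v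
  root_indeg : inDeg A ρ = 0
  root_outdeg : 2 ≤ outDeg A ρ
  reach_from_root : ∀ v, Relation.ReflTransGen A ρ v
  degree_cond : ∀ v, v ≠ ρ →
    (inDeg A v = 1 ∧ (outDeg A v = 0 ∨ 2 ≤ outDeg A v)) ∨ (2 ≤ inDeg A v ∧ outDeg A v = 1)

/-- Reticulation node: indegree ≥ 2 and outdegree 1. -/
def IsRet (A : V → V → Prop) (v : V) : Prop := 2 ≤ inDeg A v ∧ outDeg A v = 1

/-- Leaf: indegree 1 and outdegree 0. -/
def IsLeaf (A : V → V → Prop) (v : V) : Prop := inDeg A v = 1 ∧ outDeg A v = 0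

/-- Tree node: any node that is not a reticulation node. -/
def IsTreeNode (A : V → V → Prop) (v : V) : Prop := ¬ IsRet A v

/-- `u` is visible on `v`: every directed path from the root `ρ` to `v` contains `u`. -/
def Visible (A : V → V → Prop) (ρ u v : V) : Prop := ∀ p, IsPath A ρ v p → u ∈ p

/-- A network is reticulation-visible if every reticulation node is visible on some leaf. -/
def RetVisible (A : V → V → Prop) (ρ : V) : Prop :=
  ∀ r, IsRet A r → ∃ ℓ, IsLeaf A ℓ ∧ Visible A ρ r ℓ

/-- Undirected adjacency in the subgraph `N − R(N)` induced on tree nodes. -/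
def TAdj (A : V → V → Prop) (u v : V) : Prop :=
  IsTreeNode A u ∧ IsTreeNode A v ∧ (A u v ∨ A v u)

/-- `S` is a tree node component: a connected component (ignoring directions) of the
subgraph induced on the tree nodes. -/
def IsTNC (A : V → V → Prop) (S : Set V) : Prop :=
  ∃ u, IsTreeNode A u ∧ S = {v | Relation.ReflTransGen (TAdj A) u v}

/-- `r` is the root of the tree node component `S`: it lies in `S` and has indegree 0
within `N − R(N)`, i.e. it has no tree-node parent. -/
def CompRoot (A : V → V → Prop) (S : Set V) (r : V) : Prop :=
  r ∈ S ∧ ∀ u, IsTreeNode A u → ¬ A u r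

/-- Tree node component `C'` is below tree node component `C''`. -/
def Below (A : V → V → Prop) (C' C'' : Set V) : Prop :=
  ∃ r, IsRet A r ∧ (∃ c, A r c ∧ CompRoot A C' c) ∧ (∃ p ∈ C'', A p r)

/-- A big tree node component: a tree node component with at least two nodes. -/
def BigTNC (A : V → V → Prop) (C : Set V) : Prop :=
  IsTNC A C ∧ ∃ a ∈ C, ∃ b ∈ C, a ≠ b

/-- A single-leaf component: its node set is `{ℓ}` for some leaf `ℓ`. -/
def SingleLeafTNC (A : V → V → Prop) (C : Set V) : Prop :=
  ∃ ℓ, IsLeaf A ℓ ∧ C = {ℓ}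

/-- A lowest big tree node component: a big tree node component `C` such that every
tree node component whose root is a proper descendant of the root of `C` is a
single-leaf component. -/
def LowestBig (A : V → V → Prop) (C : Set V) : Prop :=
  BigTNC A C ∧ ∀ C' r' rC, IsTNC A C' → CompRoot A C' r' → CompRoot A C rC →
    Relation.TransGen A rC r' → SingleLeafTNC A C'

/-- An inner reticulation: all of its parents lie in one and the same tree node component. -/
def InnerRet (A : V → V → Prop) (r : V) : Prop :=
  IsRet A r ∧ ∃ S, IsTNC A S ∧ ∀ p, A p r → p ∈ S

/-- `IR(C)`: reticulations all of whose parents lie in `C`. -/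
def IRset (A : V → V → Prop) (C : Set V) : Set V :=
  {r | IsRet A r ∧ ∀ p, A p r → p ∈ C}

/-- `CR(C)`: reticulations with at least one parent in `C` and at least one parent outside `C`. -/
def CRset (A : V → V → Prop) (C : Set V) : Set V :=
  {r | IsRet A r ∧ (∃ p, A p r ∧ p ∈ C) ∧ (∃ p, A p r ∧ p ∉ C)}

/-- `L_C`: the leaves of the network lying in `C` together with the children of the
inner reticulations below `C`. -/
def LCset (A : V → V → Prop) (C : Set V) : Set V :=
  {ℓ | ℓ ∈ C ∧ IsLeaf A ℓ} ∪ {x | ∃ r ∈ IRset A C, A r x}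

/-- Bicombining: every reticulation node has indegree exactly 2. -/
def Bicombining (A : V → V → Prop) : Prop := ∀ r, IsRet A r → inDeg A r = 2

/-- Galled: every reticulation node `r` has an ancestor `u` admitting two
internal-node-disjoint directed paths from `u` to `r` in which every node other
than `r` is a tree node. -/
def Galled (A : V → V → Prop) : Prop :=
  ∀ r, IsRet A r → ∃ u, Relation.TransGen A u r ∧ ∃ p₁ p₂ : List V,
    IsPath A u r p₁ ∧ IsPath A u r p₂ ∧ p₁ ≠ p₂ ∧
    (∀ x, x ∈ p₁ → x ∈ p₂ → x = u ∨ x = r) ∧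
    (∀ x ∈ p₁, x ≠ r → IsTreeNode A x) ∧ (∀ x ∈ p₂, x ≠ r → IsTreeNode A x)

/-- Restriction of a digraph to a vertex subset. -/
def Restrict (A : V → V → Prop) (S : Set V) : V → V → Prop :=
  fun a b => a ∈ S ∧ b ∈ S ∧ A a b

/-- Descendants of `u` (including `u`); the vertex set of the subnetwork `D_N(u)`. -/
def Desc (A : V → V → Prop) (u : V) : Set V := {v | Relation.ReflTransGen A u v}

/-- Binary network: the root has outdegree 2, leaves have degree 1, and every other
node has total degree 3. -/
def IsBinary (A : V → V → Prop) (ρ : V) : Prop :=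
  outDeg A ρ = 2 ∧ ∀ v, v ≠ ρ →
    (inDeg A v = 1 ∧ outDeg A v = 0) ∨ (inDeg A v = 1 ∧ outDeg A v = 2) ∨
    (inDeg A v = 2 ∧ outDeg A v = 1)

/-- A phylogenetic tree: a network with no reticulation nodes. -/
def IsPhyloTree (A : W → W → Prop) (ρ : W) : Prop :=
  IsNetwork A ρ ∧ ∀ w, ¬ IsRet A w

/-- A node with indegree 1 and outdegree 1 (a suppressible node). -/
def Deg11 (A : V → V → Prop) (v : V) : Prop := inDeg A v = 1 ∧ outDeg A v = 1

/-- There is a directed path from `a` to `b` (of length ≥ 1) all of whose internal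
nodes are suppressible. -/
def SubdivPath (A : V → V → Prop) (a b : V) : Prop :=
  ∃ p : List V, IsPath A a b p ∧ 2 ≤ p.length ∧ ∀ z ∈ p, z ≠ a → z ≠ b → Deg11 A z

/-- `φ` witnesses that the digraph `A'` on the vertex set `S` is a subdivision of the
tree `AT` restricted to the vertex set `SW`: `φ` injectively maps the tree nodes onto
the non-suppressible nodes, edges of the tree correspond exactly to directed paths
whose internal nodes are suppressible, and leaves are mapped according to the leaf
correspondence `θ` (same labels). -/
def SubdivWitness (A' : V → V → Prop) (S : Set V) (AT : W → W → Prop) (SW : Set W)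
    (θ : W → V) (φ : W → V) : Prop :=
  Set.InjOn φ SW ∧ (∀ w ∈ SW, φ w ∈ S) ∧
  (∀ x ∈ S, ¬ Deg11 (Restrict A' S) x → ∃ w ∈ SW, φ w = x) ∧
  (∀ x ∈ SW, ∀ y ∈ SW, (Restrict AT SW x y ↔ SubdivPath (Restrict A' S) (φ x) (φ y))) ∧
  (∀ w ∈ SW, outDeg (Restrict AT SW) w = 0 → φ w = θ w)

/-- The digraph `A'` on vertex set `S` is a subdivision of the tree `AT` on `SW`. -/
def IsSubdivisionOf (A' : V → V → Prop) (S : Set V) (AT : W → W → Prop) (SW : Set W)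
    (θ : W → V) : Prop :=
  ∃ φ, SubdivWitness A' S AT SW θ φ

/-- `E`, `D`, `φ` witness that the subnetwork of `A` on vertex set `S` displays the
subtree of `AT` on vertex set `SW`: `E` is a set of reticulation edges of the
subnetwork containing all but one of the incoming edges of each reticulation node of
the subnetwork, `D` is a set of deleted nodes, and `φ` witnesses that the result is a
subdivision of the subtree. -/
def DisplayWitness (A : V → V → Prop) (S : Set V) (AT : W → W → Prop) (SW : Set W)
    (θ : W → V) (E : Set (V × V)) (D : Set V) (φ : W → V) : Prop :=
  (∀ e ∈ E, Restrict A S e.1 e.2 ∧ 2 ≤ inDeg (Restrict A S) e.2) ∧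
  (∀ r ∈ S, 2 ≤ inDeg (Restrict A S) r →
     ∃ p, Restrict A S p r ∧ (p, r) ∉ E ∧ ∀ q, Restrict A S q r → q ≠ p → (q, r) ∈ E) ∧
  SubdivWitness (fun a b => Restrict A S a b ∧ (a, b) ∉ E) (S \ D) AT SW θ φ

/-- The subnetwork of `A` on vertex set `S` displays the subtree of `AT` on `SW`. -/
def DisplaysOn (A : V → V → Prop) (S : Set V) (AT : W → W → Prop) (SW : Set W)
    (θ : W → V) : Prop :=
  ∃ E D φ, DisplayWitness A S AT SW θ E D φ

/-- The leaves of the subnetwork of `A` induced on vertex set `S`. -/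
def SubLeaves (A : V → V → Prop) (S : Set V) : Set V :=
  {v | v ∈ S ∧ outDeg (Restrict A S) v = 0}

/-- `B` is a soft cluster in the subnetwork of `A` on vertex set `S`: `B` is the
cluster of some node of some phylogenetic tree displayed by that subnetwork. -/
def SoftClusterOn (A : V → V → Prop) (S : Set V) (B : Set V) : Prop :=
  ∃ (W : Type) (AT : W → W → Prop) (ρT : W) (θ : W → V),
    IsPhyloTree AT ρT ∧
    Set.BijOn θ {w | IsLeaf AT w} (SubLeaves A S) ∧
    DisplaysOn A S AT Set.univ θ ∧
    ∃ x : W, θ '' {w | IsLeaf AT w ∧ Relation.ReflTransGen AT x w} = B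

/-- `B` is a soft cluster of the node `u` of `N`: there are `E` and `D` as in the
definition of display such that `u` is a node of `(N − E) − D` and the set of leaves
of `N` below `u` in `(N − E) − D` equals `B`. -/
def SoftClusterAt (A : V → V → Prop) (u : V) (B : Set V) : Prop :=
  ∃ (E : Set (V × V)) (D : Set V),
    (∀ e ∈ E, A e.1 e.2 ∧ 2 ≤ inDeg A e.2) ∧
    (∀ r, 2 ≤ inDeg A r → ∃ p, A p r ∧ (p, r) ∉ E ∧ ∀ q, A q r → q ≠ p → (q, r) ∈ E) ∧
    (∃ (W : Type) (AT : W → W → Prop) (ρT : W) (θ : W → V),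
      IsPhyloTree AT ρT ∧ Set.BijOn θ {w | IsLeaf AT w} {v | IsLeaf A v} ∧
      IsSubdivisionOf (fun a b => A a b ∧ (a, b) ∉ E) (Set.univ \ D) AT Set.univ θ) ∧
    u ∉ D ∧
    {ℓ | IsLeaf A ℓ ∧
      Relation.ReflTransGen (fun a b => A a b ∧ (a, b) ∉ E ∧ a ∉ D ∧ b ∉ D) u ℓ} = B

/-- `w` is the lowest common ancestor of the set `X` in the (tree-like) digraph `A`. -/
def IsLCAIn (A : V → V → Prop) (X : Set V) (w : V) : Prop :=
  (∀ x ∈ X, Relation.ReflTransGen A w x) ∧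
  ∀ w', (∀ x ∈ X, Relation.ReflTransGen A w' x) → Relation.ReflTransGen A w' w

end PhyloNet

/-!
Tree nodes have a single parent, so every node of `C` other than `ρ(C)` has its parent in `C`;
every node of `IR(C)` has all its parents in `C`; and in a reticulation-visible network the child
of a reticulation is a tree node, whose only parent is that reticulation. Hence a path from the
root to a leaf of `L_C` can only enter `C ∪ IR(C) ∪ L_C` through `ρ(C)`.
-/

namespace PhyloNet

open Relation

section Degrees

variable {V : Type} {A : V → V → Prop} {u v w : V}

theorem eq_of_inDeg_eq_one (h : inDeg A v = 1) (hu : A u v) (hw : A w v) : u = w := by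
  obtain ⟨a, ha⟩ := Set.ncard_eq_one.mp h
  have hu' : u ∈ {z | A z v} := hu
  have hw' : w ∈ {z | A z v} := hw
  rw [ha] at hu' hw'
  exact hu'.trans hw'.symm

theorem eq_of_outDeg_eq_one (h : outDeg A v = 1) (hu : A v u) (hw : A v w) : u = w := by
  obtain ⟨a, ha⟩ := Set.ncard_eq_one.mp h
  have hu' : u ∈ {z | A v z} := hu
  have hw' : w ∈ {z | A v z} := hw
  rw [ha] at hu' hw'
  exact hu'.trans hw'.symm

theorem exists_adj_ne_of_two_le_inDeg (h : 2 ≤ inDeg A v) (u : V) : ∃ w, A w v ∧ w ≠ u :=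
  Set.exists_ne_of_one_lt_ncard h u

theorem exists_adj_of_two_le_inDeg (h : 2 ≤ inDeg A v) : ∃ u, A u v :=
  (exists_adj_ne_of_two_le_inDeg h v).imp fun _ hu => hu.1

end Degrees

namespace IsNetwork

variable {V : Type} {A : V → V → Prop} {ρ u v w : V}

theorem not_adj_root (hN : IsNetwork A ρ) : ¬ A u ρ := by
  have := hN.finite
  intro hu
  have hempty : {z | A z ρ} = ∅ := (Set.ncard_eq_zero (Set.toFinite _)).mp hN.root_indeg
  exact hempty.subset hu

theorem eq_of_adj_of_isTreeNode (hN : IsNetwork A ρ) (hv : IsTreeNode A v) (hu : A u v)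
    (hw : A w v) : u = w := by
  have hvρ : v ≠ ρ := by
    rintro rfl
    exact hN.not_adj_root hu
  rcases hN.degree_cond v hvρ with ⟨hdeg, -⟩ | hret
  · exact eq_of_inDeg_eq_one hdeg hu hw
  · exact absurd hret hv

end IsNetwork

section Paths

variable {V : Type} {A : V → V → Prop} {u v x r : V} {p : List V}

theorem exists_isPath (h : ReflTransGen A u v) : ∃ p, IsPath A u v p := by
  obtain ⟨l, hl, hlast⟩ := List.exists_isChain_cons_of_relationReflTransGen h
  exact ⟨u :: l, hl, rfl, (List.getLast_eq_iff_getLast?_eq_some _).mp hlast⟩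

theorem exists_isPath_not_mem (h : ReflTransGen (fun a b => A a b ∧ b ≠ r) u v) (hu : u ≠ r) :
    ∃ p, IsPath A u v p ∧ r ∉ p := by
  obtain ⟨p, hchain, hhead, hlast⟩ := exists_isPath h
  refine ⟨p, ⟨hchain.imp fun _ _ => And.left, hhead, hlast⟩, fun hr => ?_⟩
  refine hchain.induction (· ≠ r) p (fun _ _ hab _ => hab.2) (fun hne => ?_) r hr rfl
  rwa [(List.head_eq_iff_head?_eq_some hne).mpr hhead]

theorem IsPath.reflTransGen_of_mem (hp : IsPath A u v p) (hx : x ∈ p) : ReflTransGen A x v :=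
  hp.1.backwards_induction (ReflTransGen A · v) p (fun _ _ hab hb => hb.head hab)
    (fun hne => by rw [(List.getLast_eq_iff_getLast?_eq_some hne).mpr hp.2.2]) x hx

theorem IsPath.mem_of_parents_mem {S : Set V} {c : V} (hp : IsPath A u v p)
    (hS : ∀ x ∈ S, x ≠ c → ∀ y, A y x → y ∈ S) (hu : u ∈ S → u = c) (hv : v ∈ S) :
    c ∈ p := by
  by_contra hc
  have hchain : p.IsChain (fun a b => A a b ∧ b ≠ c) :=
    hp.1.imp_of_mem_imp fun _ b _ hb hab => ⟨hab, fun h => hc (h ▸ hb)⟩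
  have hpS : ∀ x ∈ p, x ∈ S := hchain.backwards_induction (· ∈ S) p
    (fun a b hab hb => hS b hb hab.2 a hab.1)
    (fun hne => by rwa [(List.getLast_eq_iff_getLast?_eq_some hne).mpr hp.2.2])
  obtain ⟨t, rfl⟩ := List.head?_eq_some_iff.mp hp.2.1
  exact hc (hu (hpS u List.mem_cons_self) ▸ List.mem_cons_self)

theorem visible_of_parents_mem {ρ c : V} {S : Set V} (hρ : ∀ y, ¬ A y ρ)
    (hS : ∀ x ∈ S, x ≠ c → (∃ y, A y x) ∧ ∀ y, A y x → y ∈ S) (hv : v ∈ S) :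
    Visible A ρ c v := by
  refine fun p hp => hp.mem_of_parents_mem (fun x hx hxc => (hS x hx hxc).2) (fun hρS => ?_) hv
  by_contra hρc
  obtain ⟨y, hy⟩ := (hS ρ hρS hρc).1
  exact hρ y hy

theorem reflTransGen_of_forall_ne (h : ReflTransGen A u v)
    (hr : ∀ x, ReflTransGen A u x → ReflTransGen A x v → x ≠ r) :
    ReflTransGen (fun a b => A a b ∧ b ≠ r) u v := by
  induction h with
  | refl => exact .refl
  | tail hux hxv ih =>
    exact (ih fun y huy hyx => hr y huy (hyx.tail hxv)).tail ⟨hxv, hr _ (hux.tail hxv) .refl⟩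

end Paths

section Components

variable {V : Type} {A : V → V → Prop} {ρ a b u v rC : V} {C : Set V}

instance : Std.Symm (TAdj A) := ⟨fun _ _ h => ⟨h.2.1, h.1, h.2.2.symm⟩⟩

theorem isTreeNode_of_reflTransGen_tAdj (hu : IsTreeNode A u) (h : ReflTransGen (TAdj A) u v) :
    IsTreeNode A v := by
  rcases h.cases_tail with rfl | ⟨_, _, hv⟩
  · exact hu
  · exact hv.2.1

/-- Tree nodes have a single parent, so an undirected walk inside a tree node component that
starts at a node without tree-node parent can never step upwards. -/
theorem reflTransGen_of_reflTransGen_tAdj (hN : IsNetwork A ρ)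
    (ha : ∀ z, IsTreeNode A z → ¬ A z a) (h : ReflTransGen (TAdj A) a b) :
    ReflTransGen A a b := by
  induction h with
  | refl => exact .refl
  | @tail x y _ hxy ih =>
    rcases hxy.2.2 with hxy' | hyx
    · exact ih.tail hxy'
    · rcases ih.cases_tail with rfl | ⟨w, haw, hwx⟩
      · exact absurd hyx (ha y hxy.2.1)
      · rwa [hN.eq_of_adj_of_isTreeNode hxy.1 hyx hwx]

theorem eq_of_reflTransGen_tAdj (hN : IsNetwork A ρ) (ha : ∀ z, IsTreeNode A z → ¬ A z a)
    (hb : ∀ z, IsTreeNode A z → ¬ A z b) (h : ReflTransGen (TAdj A) a b) : a = b := by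
  have hab := reflTransGen_of_reflTransGen_tAdj hN ha h
  have hba := reflTransGen_of_reflTransGen_tAdj hN hb (Std.Symm.symm _ _ h)
  rcases hab.cases_head with hab' | ⟨c, hac, hcb⟩
  · exact hab'
  · exact absurd (TransGen.head' hac (hcb.trans hba)) (hN.acyclic a)

theorem IsTNC.parents_mem_of_compRoot (hC : IsTNC A C) (hN : IsNetwork A ρ)
    (hrC : CompRoot A C rC) (hv : v ∈ C) (hvr : v ≠ rC) :
    (∃ y, A y v) ∧ ∀ y, A y v → y ∈ C := by
  obtain ⟨u, hu, rfl⟩ := hC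
  have hvt : IsTreeNode A v := isTreeNode_of_reflTransGen_tAdj hu hv
  obtain ⟨z, hz, hzv⟩ : ∃ z, IsTreeNode A z ∧ A z v := by
    by_contra! hno
    exact hvr (eq_of_reflTransGen_tAdj hN hno hrC.2
      ((Std.Symm.symm _ _ hv).trans hrC.1))
  refine ⟨⟨z, hzv⟩, fun y hyv => ?_⟩
  rw [hN.eq_of_adj_of_isTreeNode hvt hyv hzv]
  exact hv.tail ⟨hvt, hz, Or.inr hzv⟩

end Components

section Reticulations

variable {V : Type} {A : V → V → Prop} {ρ r x y : V}

/-- If `x` had a second parent `q`, a path from the root to `q` followed by `x` and a path from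
`x` to a leaf on which `r` is visible would avoid `r`. -/
theorem RetVisible.not_isRet_of_adj (hRV : RetVisible A ρ) (hN : IsNetwork A ρ) (hr : IsRet A r)
    (hrx : A r x) : ¬ IsRet A x := by
  intro hx
  obtain ⟨ℓ, hℓ, hvis⟩ := hRV r hr
  obtain ⟨q, hqx, hqr⟩ := exists_adj_ne_of_two_le_inDeg hx.1 r
  have hvia : ∀ y, ReflTransGen A r y → y ≠ r → ReflTransGen A x y := by
    intro y hry hyr
    obtain ⟨z, hrz, hzy⟩ := hry.cases_head.resolve_left hyr.symm
    rwa [eq_of_outDeg_eq_one hr.2 hrz hrx] at hzy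
  have hxr : ¬ ReflTransGen A x r := fun h => hN.acyclic r (TransGen.head' hrx h)
  have hrq : ¬ ReflTransGen A r q := fun h => hN.acyclic x (TransGen.tail' (hvia q h hqr) hqx)
  have hρr : ρ ≠ r := by
    rintro rfl
    obtain ⟨y, hy⟩ := exists_adj_of_two_le_inDeg hr.1
    exact hN.not_adj_root hy
  obtain ⟨p, hp⟩ := exists_isPath (hN.reach_from_root ℓ)
  have hrℓ := hp.reflTransGen_of_mem (hvis p hp)
  have hℓr : ℓ ≠ r := by
    rintro rfl
    exact absurd (hℓ.2.symm.trans hr.2) zero_ne_one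
  have hρq : ReflTransGen (fun a b => A a b ∧ b ≠ r) ρ q :=
    reflTransGen_of_forall_ne (hN.reach_from_root q) fun z _ hzq hzr => hrq (hzr ▸ hzq)
  have hxℓ : ReflTransGen (fun a b => A a b ∧ b ≠ r) x ℓ :=
    reflTransGen_of_forall_ne (hvia ℓ hrℓ hℓr) fun z hxz _ hzr => hxr (hzr ▸ hxz)
  obtain ⟨p', hp', hrp'⟩ :=
    exists_isPath_not_mem ((hρq.tail ⟨hqx, fun h => hxr (h ▸ .refl)⟩).trans hxℓ) hρr
  exact hrp' (hvis p' hp')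

theorem RetVisible.eq_of_adj_of_adj_of_isRet (hRV : RetVisible A ρ) (hN : IsNetwork A ρ)
    (hr : IsRet A r) (hrx : A r x) (hyx : A y x) : y = r :=
  hN.eq_of_adj_of_isTreeNode (hRV.not_isRet_of_adj hN hr hrx) hyx hrx

end Reticulations

/-- In a reticulation-visible network, the root of a lowest big tree node component `C`
is visible on every leaf in `L_C`. -/
theorem root_of_lowest_visible_on_LC {V : Type} (A : V → V → Prop) (ρ : V)
    (hN : IsNetwork A ρ) (hRV : RetVisible A ρ)
    (C : Set V) (rC : V) (hC : LowestBig A C) (hrC : CompRoot A C rC) :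
    ∀ ℓ ∈ LCset A C, Visible A ρ rC ℓ := by
  intro ℓ hℓ
  refine visible_of_parents_mem (S := C ∪ IRset A C ∪ LCset A C) (fun _ => hN.not_adj_root)
    ?_ (Or.inr hℓ)
  intro x hx hxr
  obtain hxC | ⟨hxret, hxpar⟩ | ⟨r, hr, hrx⟩ :
      x ∈ C ∨ x ∈ IRset A C ∨ ∃ r ∈ IRset A C, A r x := by
    rcases hx with (hx | hx) | (⟨hx, -⟩ | hx) <;> tauto
  · exact (hC.1.1.parents_mem_of_compRoot hN hrC hxC hxr).imp id
      fun hpar y hy => Or.inl (Or.inl (hpar y hy))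
  · exact ⟨exists_adj_of_two_le_inDeg hxret.1, fun y hy => Or.inl (Or.inl (hxpar y hy))⟩
  · refine ⟨⟨r, hrx⟩, fun y hy => ?_⟩
    rw [hRV.eq_of_adj_of_adj_of_isRet hN hr.1 hrx hy]
    exact Or.inl (Or.inr hr)

end PhyloNet
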